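/- arXiv:2107.06838 — 4 statements merged into one kernel-verified Lean document; each statement's English description precedes it below -/
import Mathlib

section
/- Let K be a field with char K ≠ 2 (or char K = 0), and n ≥ 2. Consider the natural action of the symmetric group S_n on K^n permuting coordinates. Then the only S_n-stable (invariant) linear subspaces of K^n other than 0 and K^n are L = span(1,1,...,1) and M = {(α_1,...,α_n) : α_1 + ... + α_n = 0}. -/
/-!
If `W` contains a vector `v` with `v i ≠ v j`, then `v` minus its image under the
transposition `(i j)` is a nonzero multiple of `eᵢ - eⱼ`, so `eᵢ - eⱼ ∈ W`. Since `Sₙ` is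
`2`-transitive, every `eₖ - eₗ` then lies in `W`; these span the hyperplane `M`, which is a
coatom, so `W` is `M` or `Kⁿ`. Otherwise every vector of `W` is constant, so `W` lies in the
line `L` and is `0` or `L`.
-/

open Submodule

def Submodule.IsPermStable {K ι : Type*} [Semiring K] (W : Submodule K (ι → K)) : Prop :=
  ∀ σ : Equiv.Perm ι, ∀ v ∈ W, (fun i => v (σ i)) ∈ W

theorem Equiv.Perm.exists_apply_eq_and_apply_eq {α : Type*} {i j k l : α}
    (hij : i ≠ j) (hkl : k ≠ l) : ∃ σ : Equiv.Perm α, σ i = k ∧ σ j = l :=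
  MulAction.is_two_pretransitive_iff.1 (Equiv.Perm.isMultiplyPretransitive α 2) hij hkl

theorem Submodule.eq_bot_or_eq_of_le_span_singleton {K V : Type*} [DivisionRing K]
    [AddCommGroup V] [Module K V] {W : Submodule K V} {v : V} (hW : W ≤ K ∙ v) :
    W = ⊥ ∨ W = K ∙ v := by
  rcases eq_or_ne v 0 with rfl | hv
  · simpa using hW
  · exact (nonzero_span_atom v hv).le_iff.1 hW

section Ring

variable {R ι : Type*} [Ring R]

theorem mem_span_const_one_of_forall_eq {v : ι → R} (hv : ∀ i j, v i = v j) :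
    v ∈ R ∙ (fun _ => 1 : ι → R) := by
  cases isEmpty_or_nonempty ι with
  | inl => simp [Subsingleton.elim v 0]
  | inr h =>
    obtain ⟨z⟩ := h
    exact mem_span_singleton.2 ⟨v z, funext fun i => by simp [hv i z]⟩

variable [DecidableEq ι]

theorem sub_comp_swap_eq_smul_single_sub_single (v : ι → R) (i j : ι) :
    v - v ∘ Equiv.swap i j = (v i - v j) • (Pi.single i 1 - Pi.single j 1 : ι → R) := by
  ext k
  rcases eq_or_ne k i with rfl | hki
  · rcases eq_or_ne k j with rfl | hkj <;> simp [*]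
  rcases eq_or_ne k j with rfl | hkj
  · simp [hki]
  · simp [Equiv.swap_apply_of_ne_of_ne hki hkj, hki, hkj]

variable [Fintype ι]

theorem sum_smul_single_sub_single {m : ι → R} (hm : ∑ k, m k = 0) (z : ι) :
    ∑ k, m k • (Pi.single k 1 - Pi.single z 1 : ι → R) = m := by
  simp_rw [smul_sub]
  rw [Finset.sum_sub_distrib, ← Finset.sum_smul, hm, zero_smul, sub_zero]
  simp_rw [← Pi.single_smul', smul_eq_mul, mul_one]
  exact Finset.univ_sum_single m

theorem ker_sum_proj_le_of_single_sub_single_mem {W : Submodule R (ι → R)} (z : ι)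
    (hW : ∀ k, (Pi.single k 1 - Pi.single z 1 : ι → R) ∈ W) :
    LinearMap.ker (∑ i : ι, LinearMap.proj (R := R) (φ := fun _ : ι => R) i) ≤ W := by
  intro m hm
  have hsum : ∑ k, m k = 0 := by simpa using hm
  rw [← sum_smul_single_sub_single hsum z]
  exact W.sum_mem fun k _ => W.smul_mem _ (hW k)

end Ring

theorem isCoatom_ker_sum_proj {K ι : Type*} [DivisionRing K] [Fintype ι] [Nonempty ι] :
    IsCoatom (LinearMap.ker (∑ i : ι, LinearMap.proj (R := K) (φ := fun _ : ι => K) i)) := by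
  classical
  obtain ⟨z⟩ := ‹Nonempty ι›
  exact LinearMap.isCoatom_ker_of_surjective fun c => ⟨Pi.single z c, by simp⟩

namespace Submodule.IsPermStable

variable {K ι : Type*} [Field K] [DecidableEq ι] {W : Submodule K (ι → K)}

theorem single_sub_single_mem_of_apply_ne (hW : W.IsPermStable) {v : ι → K} (hv : v ∈ W)
    {i j : ι} (hvij : v i ≠ v j) : (Pi.single i 1 - Pi.single j 1 : ι → K) ∈ W := by
  have hdiff : v - v ∘ Equiv.swap i j ∈ W := W.sub_mem hv (hW _ v hv)
  rw [sub_comp_swap_eq_smul_single_sub_single] at hdiff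
  exact (W.smul_mem_iff (sub_ne_zero.2 hvij)).1 hdiff

theorem single_sub_single_mem (hW : W.IsPermStable) {i j : ι} (hij : i ≠ j)
    (hmem : (Pi.single i 1 - Pi.single j 1 : ι → K) ∈ W) (k l : ι) :
    (Pi.single k 1 - Pi.single l 1 : ι → K) ∈ W := by
  rcases eq_or_ne k l with rfl | hkl
  · simp
  obtain ⟨σ, hσk, hσl⟩ := Equiv.Perm.exists_apply_eq_and_apply_eq hkl hij
  convert hW σ _ hmem using 1
  ext x
  simp [← hσk, ← hσl, Pi.single_apply]

theorem ker_sum_proj_le_of_apply_ne [Fintype ι] (hW : W.IsPermStable) {v : ι → K} (hv : v ∈ W)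
    {i j : ι} (hvij : v i ≠ v j) :
    LinearMap.ker (∑ i : ι, LinearMap.proj (R := K) (φ := fun _ : ι => K) i) ≤ W :=
  ker_sum_proj_le_of_single_sub_single_mem i fun k =>
    hW.single_sub_single_mem (ne_of_apply_ne v hvij)
      (hW.single_sub_single_mem_of_apply_ne hv hvij) k i

end Submodule.IsPermStable

theorem symmetric_group_invariant_subspaces_general
    (K : Type*) [Field K] (n : ℕ)
    (W : Submodule K (Fin n → K))
    (hW : ∀ σ : Equiv.Perm (Fin n), ∀ v ∈ W, (fun i => v (σ i)) ∈ W) :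
    W = ⊥ ∨ W = ⊤ ∨
      W = Submodule.span K {(fun _ => (1 : K) : Fin n → K)} ∨
      W = LinearMap.ker (∑ i : Fin n, LinearMap.proj (R := K) (φ := fun _ : Fin n => K) i) := by
  have hW : W.IsPermStable := hW
  by_cases hconst : ∀ v ∈ W, ∀ i j, v i = v j
  · have hWL : W ≤ K ∙ (fun _ => 1) := fun v hv => mem_span_const_one_of_forall_eq (hconst v hv)
    rcases eq_bot_or_eq_of_le_span_singleton hWL with h | h
    · exact Or.inl h
    · exact Or.inr (Or.inr (Or.inl h))
  · push Not at hconst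
    obtain ⟨v, hv, i, j, hvij⟩ := hconst
    have : Nonempty (Fin n) := ⟨i⟩
    rcases isCoatom_ker_sum_proj.le_iff.1 (hW.ker_sum_proj_le_of_apply_ne hv hvij) with h | h
    · exact Or.inr (Or.inl h)
    · exact Or.inr (Or.inr (Or.inr h))

/-- The only `Sₙ`-stable subspaces of `Kⁿ` (permutation action on coordinates) are
`0`, `Kⁿ`, the line `L` spanned by the all-ones vector, and the hyperplane `M` of
vectors with coordinate sum zero. -/
theorem symmetric_group_invariant_subspaces
    (K : Type*) [Field K] (hK : ringChar K ≠ 2) (n : ℕ) (hn : 2 ≤ n)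
    (W : Submodule K (Fin n → K))
    (hW : ∀ σ : Equiv.Perm (Fin n), ∀ v ∈ W, (fun i => v (σ i)) ∈ W) :
    W = ⊥ ∨ W = ⊤ ∨
      W = Submodule.span K {(fun _ => (1 : K) : Fin n → K)} ∨
      W = LinearMap.ker (∑ i : Fin n, LinearMap.proj (R := K) (φ := fun _ : Fin n => K) i) :=
  symmetric_group_invariant_subspaces_general K n W hW
end

section
/- Let D = ∑_{i=1}^n ∂/∂x_i acting on K[x_1,...,x_n]. Then D(h_k) = (n+k-1)·h_{k-1}, where h_k is the k-th complete homogeneous symmetric polynomial in x_1,...,x_n (with h_0 = 1). -/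
/-!
Each monomial `xᵗ` of degree `k` arises in `∂ᵢ h_{k+1}` exactly once, from `xᵢ xᵗ`, with
coefficient `mult_i(t) + 1`. Summing over `i`, the multiplicities add up to `k` and the ones
to `n`, so every monomial of `h_k` appears in `D h_{k+1}` with coefficient `n + k`.
-/

open MvPolynomial

theorem Sym.sum_count_add_one {α : Type*} [DecidableEq α] [Fintype α] {n : ℕ} (s : Sym α n) :
    ∑ a, (s.1.count a + 1) = n + Fintype.card α := by
  rw [Finset.sum_add_distrib, Multiset.sum_count_eq_card fun a _ => Finset.mem_univ a,
    Finset.sum_const, Finset.card_univ, smul_eq_mul, mul_one, s.2]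

namespace MvPolynomial

variable {σ R : Type*} [CommSemiring R] [DecidableEq σ]

theorem pderiv_prod_map_X (i : σ) (m : Multiset σ) :
    pderiv i (m.map (X : σ → MvPolynomial σ R)).prod =
      m.count i • ((m.erase i).map X).prod := by
  induction m using Multiset.induction with
  | empty => simp
  | cons a m ih =>
    rw [Multiset.map_cons, Multiset.prod_cons, pderiv_mul, ih, mul_smul_comm]
    by_cases hai : a = i
    · subst hai
      rw [pderiv_X_self, one_mul, Multiset.count_cons_self, Multiset.erase_cons_head,
        succ_nsmul']
      by_cases ham : a ∈ m
      · rw [← Multiset.prod_cons, ← Multiset.map_cons, Multiset.cons_erase ham]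
      · rw [Multiset.count_eq_zero_of_notMem ham, zero_smul, zero_smul]
    · rw [pderiv_X_of_ne hai, zero_mul, zero_add, Multiset.count_cons_of_ne (Ne.symm hai),
        Multiset.erase_cons_tail _ hai, Multiset.map_cons, Multiset.prod_cons]

variable [Fintype σ]

theorem pderiv_hsymm_succ (i : σ) (k : ℕ) :
    pderiv i (hsymm σ R (k + 1)) =
      ∑ t : Sym σ k, (t.1.count i + 1) • (t.1.map X).prod := by
  have hvanish : ∀ s : Sym σ (k + 1),
      s.1.count i • ((s.1.erase i).map (X : σ → MvPolynomial σ R)).prod ≠ 0 → i ∈ s :=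
    fun s hs => Multiset.count_ne_zero.mp fun h => hs (by rw [h, zero_smul])
  rw [hsymm, map_sum, Finset.sum_congr rfl fun s _ => pderiv_prod_map_X i s.1,
    ← Finset.sum_filter_of_ne fun s _ => hvanish s]
  refine (Finset.sum_bij' (fun t _ => i ::ₛ t)
    (fun s hs => s.erase i (Finset.mem_filter.mp hs).2) (fun t _ => by simp)
    (fun _ _ => Finset.mem_univ _) (fun t _ => Sym.erase_cons_head t i)
    (fun _ _ => Sym.cons_erase _) fun t _ => ?_).symm
  simp only [Sym.val_eq_coe, Sym.coe_cons, Multiset.count_cons_self, Multiset.erase_cons_head]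

theorem sum_pderiv_hsymm_succ (k : ℕ) :
    ∑ i, pderiv i (hsymm σ R (k + 1)) = (k + Fintype.card σ) • hsymm σ R k := by
  rw [Finset.sum_congr rfl fun i _ => pderiv_hsymm_succ i k, Finset.sum_comm, hsymm,
    Finset.smul_sum]
  refine Finset.sum_congr rfl fun t _ => ?_
  rw [← Finset.sum_smul, t.sum_count_add_one]

end MvPolynomial

/-- For `D = ∑ᵢ ∂/∂xᵢ` acting on `K[x₁,…,xₙ]`, `D(hₖ) = (n+k-1)·h_{k-1}` for the
complete homogeneous symmetric polynomials. -/
theorem sum_pderiv_hsymm (K : Type*) [CommRing K] (n k : ℕ) (hk1 : 1 ≤ k) :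
    (∑ i : Fin n, pderiv i (hsymm (Fin n) K k)) =
      ((n + k - 1 : ℕ) : MvPolynomial (Fin n) K) * hsymm (Fin n) K (k - 1) := by
  obtain ⟨k, rfl⟩ := Nat.exists_eq_add_of_le' hk1
  rw [show n + (k + 1) - 1 = k + n by omega, Nat.add_sub_cancel, sum_pderiv_hsymm_succ,
    Fintype.card_fin, nsmul_eq_mul]
end

section
/- Let K be an algebraically closed field of characteristic 2. The polynomial h_3(x,y,z) = x^3 + y^3 + z^3 + x^2y + x^2z + xy^2 + xz^2 + y^2z + yz^2 + xyz, rewritten in the variables t = x - y, q = y - z, r = z, equals t^3 + t^2 r + tqr + q^2 r, and this polynomial is irreducible in K[t,q,r]. -/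
open MvPolynomial

/-!
Over `ℤ` the two sides of the substitution identity differ by twice a polynomial. For
irreducibility, view the cubic as a monic polynomial in `t` over `R[q, r]`: its lower coefficients
`r`, `qr`, `q²r` are all divisible by the prime `r`, while `q²r` is not divisible by `r²`, so
Eisenstein's criterion applies.
-/

theorem h3_add_add_of_charTwo {R : Type*} [CommRing R] [CharP R 2] (t q r : R) :
    (t + q + r) ^ 3 + (q + r) ^ 3 + r ^ 3 + (t + q + r) ^ 2 * (q + r) + (t + q + r) ^ 2 * r +
        (t + q + r) * (q + r) ^ 2 + (t + q + r) * r ^ 2 + (q + r) ^ 2 * r + (q + r) * r ^ 2 +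
        (t + q + r) * (q + r) * r =
      t ^ 3 + t ^ 2 * r + t * q * r + q ^ 2 * r := by
  linear_combination (2 * t ^ 2 * q + 2 * t ^ 2 * r + 3 * t * q ^ 2 + 7 * t * q * r +
    5 * t * r ^ 2 + 2 * q ^ 3 + 7 * q ^ 2 * r + 10 * q * r ^ 2 + 5 * r ^ 3) *
      CharTwo.two_eq_zero (R := R)

theorem irreducible_cubic_of_prime_of_not_dvd {A : Type*} [CommRing A] [IsDomain A] {p a : A}
    (hp : Prime p) (hpa : ¬p ∣ a) :
    Irreducible (Polynomial.X ^ 3 + Polynomial.C p * Polynomial.X ^ 2 +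
      Polynomial.C (a * p) * Polynomial.X + Polynomial.C (a ^ 2 * p)) := by
  set f : Polynomial A := Polynomial.X ^ 3 + Polynomial.C p * Polynomial.X ^ 2 +
      Polynomial.C (a * p) * Polynomial.X + Polynomial.C (a ^ 2 * p) with hf
  have hmonic : f.Monic := by rw [hf]; monicity!
  have hdeg : f.natDegree = 3 := by rw [hf]; compute_degree!
  have hc0 : f.coeff 0 = a ^ 2 * p := by simp [hf, -map_mul, -map_pow]
  have hc1 : f.coeff 1 = a * p := by simp [hf, -map_mul, -map_pow]
  have hc2 : f.coeff 2 = p := by simp [hf, -map_mul, -map_pow]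
  have hP := (Ideal.span_singleton_prime hp.ne_zero).mpr hp
  refine (hmonic.isEisensteinAt_of_mem_of_notMem hP.ne_top ?_ ?_).irreducible hP
    hmonic.isPrimitive (by omega)
  · intro n hn
    rw [hdeg] at hn
    rw [Ideal.mem_span_singleton]
    interval_cases n
    · exact hc0 ▸ dvd_mul_left p _
    · exact hc1 ▸ dvd_mul_left p _
    · exact hc2 ▸ dvd_rfl
  · rw [hc0, Ideal.span_singleton_pow, Ideal.mem_span_singleton, pow_two,
      mul_dvd_mul_iff_right hp.ne_zero]
    exact fun h => hpa (hp.dvd_of_dvd_pow h)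

theorem finSuccEquiv_cubic {R : Type*} [CommRing R] :
    finSuccEquiv R 2 (X 0 ^ 3 + X 0 ^ 2 * X 2 + X 0 * X 1 * X 2 + X 1 ^ 2 * X 2) =
      Polynomial.X ^ 3 + Polynomial.C (X 1) * Polynomial.X ^ 2 +
        Polynomial.C (X 0 * X 1) * Polynomial.X + Polynomial.C (X 0 ^ 2 * X 1) := by
  rw [show (X 1 : MvPolynomial (Fin 3) R) = X (Fin.succ 0) from rfl,
    show (X 2 : MvPolynomial (Fin 3) R) = X (Fin.succ 1) from rfl]
  simp only [map_add, map_mul, map_pow, finSuccEquiv_X_zero, finSuccEquiv_X_succ]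
  ring

theorem X_one_not_dvd_X_zero {R : Type*} [CommRing R] [Nontrivial R] :
    ¬(X 1 : MvPolynomial (Fin 2) R) ∣ X 0 := by
  rintro ⟨d, hd⟩
  simpa using congrArg (eval ![1, 0]) hd

theorem irreducible_cubic_mvPolynomial {R : Type*} [CommRing R] [IsDomain R] :
    Irreducible (X 0 ^ 3 + X 0 ^ 2 * X 2 + X 0 * X 1 * X 2 + X 1 ^ 2 * X 2 :
      MvPolynomial (Fin 3) R) := by
  have h := irreducible_cubic_of_prime_of_not_dvd (X_prime (i := 1))
    (X_one_not_dvd_X_zero (R := R))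
  rw [← finSuccEquiv_cubic] at h
  exact (MulEquiv.irreducible_iff (finSuccEquiv R 2)).mp h

theorem h3_char_two_rewrite_and_irreducible_general
    (K : Type*) [Field K] [CharP K 2] :
    (letI t : MvPolynomial (Fin 3) K := X 0
     letI q : MvPolynomial (Fin 3) K := X 1
     letI r : MvPolynomial (Fin 3) K := X 2
     letI x := t + q + r
     letI y := q + r
     letI z := r
     x ^ 3 + y ^ 3 + z ^ 3 + x ^ 2 * y + x ^ 2 * z + x * y ^ 2 + x * z ^ 2 +
         y ^ 2 * z + y * z ^ 2 + x * y * z =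
       t ^ 3 + t ^ 2 * r + t * q * r + q ^ 2 * r) ∧
      Irreducible
        (X 0 ^ 3 + X 0 ^ 2 * X 2 + X 0 * X 1 * X 2 + X 1 ^ 2 * X 2 :
          MvPolynomial (Fin 3) K) :=
  ⟨h3_add_add_of_charTwo _ _ _, irreducible_cubic_mvPolynomial⟩

/-- In characteristic 2, the complete homogeneous polynomial `h₃(x,y,z)`, rewritten in
the variables `t = x - y`, `q = y - z`, `r = z` (i.e. `x = t+q+r`, `y = q+r`, `z = r`),
equals `t³ + t²r + tqr + q²r`, and this polynomial is irreducible. -/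
theorem h3_char_two_rewrite_and_irreducible
    (K : Type*) [Field K] [IsAlgClosed K] [CharP K 2] :
    (letI t : MvPolynomial (Fin 3) K := X 0
     letI q : MvPolynomial (Fin 3) K := X 1
     letI r : MvPolynomial (Fin 3) K := X 2
     letI x := t + q + r
     letI y := q + r
     letI z := r
     x ^ 3 + y ^ 3 + z ^ 3 + x ^ 2 * y + x ^ 2 * z + x * y ^ 2 + x * z ^ 2 +
         y ^ 2 * z + y * z ^ 2 + x * y * z =
       t ^ 3 + t ^ 2 * r + t * q * r + q ^ 2 * r) ∧
      Irreducible
        (X 0 ^ 3 + X 0 ^ 2 * X 2 + X 0 * X 1 * X 2 + X 1 ^ 2 * X 2 :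
          MvPolynomial (Fin 3) K) :=
  h3_char_two_rewrite_and_irreducible_general K
end

section
/- Let K be an algebraically closed field of characteristic 0 or p with p ∤ n, let d ≥ 2 with n > d, and let λ be a partition of d all of whose parts are at least 2. If additionally (in positive characteristic) p does not divide (n+1-k_i)·a_i for some part size k_i with multiplicity a_i in λ, then l = x_1+...+x_n does not divide e_λ = ∏_i e_{λ_i} and D(e_λ) ≠ 0, where D = ∑_i ∂/∂x_i. -/
/-!
The substitution `Xᵢ ↦ e_{i+1}` is injective and its image consists of the symmetric polynomials
(the fundamental theorem of symmetric polynomials); `e_λ` is the image of the monomial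
`∏ X_{k_i - 1}^{a_i}`. If `e₁ ∣ e_λ`, the quotient is symmetric as well, so pulling back gives
`X₀ ∣ ∏ X_{k_i - 1}^{a_i}`, impossible since every `k_i ≥ 2`.

For `D = ∑ ∂/∂xⱼ` one has `D e_{m+1} = (n - m) e_m`, so by the chain rule `D e_λ` is the image of
`∑_i (n + 1 - k_i) a_i X_{k_i - 2} X_{k_i - 1}^{a_i - 1} ∏_{j ≠ i} X_{k_j - 1}^{a_j}`. These monomials
are pairwise distinct, so the sum is nonzero as soon as one coefficient is.
-/

open MvPolynomial Finset Function

theorem Derivation.map_mvPolynomial_aeval {σ R A M : Type*} [Fintype σ] [CommSemiring R]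
    [CommSemiring A] [Algebra R A] [AddCommMonoid M] [Module A M] [Module R M]
    (D : Derivation R A M) (f : σ → A) (p : MvPolynomial σ R) :
    D (aeval f p) = ∑ i, aeval f (pderiv i p) • D (f i) := by
  classical
  induction p using MvPolynomial.induction_on with
  | C r => simp
  | add p q hp hq => simp [hp, hq, add_smul, sum_add_distrib]
  | mul_X p j hp =>
    simp only [map_mul, aeval_X, Derivation.leibniz, hp, pderiv_X, map_add, add_smul,
      sum_add_distrib, smul_sum]
    simp [Pi.single_apply, mul_smul, apply_ite (aeval f), ite_smul]

theorem Finsupp.injective_tsub_single_add_single {σ ι : Type*} {α : σ →₀ ℕ} {v w : ι → σ}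
    (hv : Injective v) (hvw : ∀ t, w t ≠ v t) (hα : ∀ t, α (v t) ≠ 0) :
    Injective fun t => α - single (v t) 1 + single (w t) 1 := by
  classical
  intro t t' h
  by_contra hne
  -- at `v t` the left side is `α (v t) - 1` and the right side is at least `α (v t)`
  have := DFunLike.congr_fun h (v t)
  simp [single_apply, hv.ne hne, hvw] at this
  have := hα t
  omega

namespace MvPolynomial

variable {σ R : Type*}

theorem pderiv_prod_X [CommSemiring R] [DecidableEq σ] (j : σ) (t : Finset σ) :
    pderiv j (∏ i ∈ t, X i : MvPolynomial σ R) = if j ∈ t then ∏ i ∈ t.erase j, X i else 0 := by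
  induction t using Finset.induction with
  | empty => simp
  | insert x t hx ih =>
    rw [prod_insert hx, pderiv_mul, ih, pderiv_X]
    by_cases hjx : j = x
    · subst hjx
      simp [hx]
    · by_cases hj : j ∈ t
      · simp [hj, hjx, erase_insert_of_ne (Ne.symm hjx), prod_insert, hx]
      · simp [hj, hjx]

theorem sum_pderiv_esymm_succ [CommSemiring R] [Fintype σ] (m : ℕ) :
    ∑ j, pderiv j (esymm σ R (m + 1)) = (Fintype.card σ - m) • esymm σ R m := by
  classical
  calc ∑ j, pderiv j (esymm σ R (m + 1))
      = ∑ t ∈ powersetCard (m + 1) univ, ∑ j ∈ t, ∏ i ∈ t.erase j, (X i : MvPolynomial σ R) := by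
        simp_rw [esymm, map_sum, pderiv_prod_X]
        rw [sum_comm]
        simp
    _ = ∑ s ∈ powersetCard m univ, ∑ j ∈ sᶜ, ∏ i ∈ s, (X i : MvPolynomial σ R) := by
        rw [sum_sigma', sum_sigma']
        refine sum_bij' (fun p _ => ⟨p.1.erase p.2, p.2⟩) (fun p _ => ⟨insert p.2 p.1, p.2⟩)
          ?_ ?_ ?_ ?_ ?_
        · rintro ⟨t, j⟩ h
          simp only [mem_sigma, mem_powersetCard_univ] at h ⊢
          exact ⟨by rw [card_erase_of_mem h.2, h.1, Nat.add_sub_cancel], by simp⟩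
        · rintro ⟨s, j⟩ h
          simp only [mem_sigma, mem_powersetCard_univ, mem_compl] at h ⊢
          exact ⟨by rw [card_insert_of_notMem h.2, h.1], mem_insert_self j s⟩
        · rintro ⟨t, j⟩ h
          simp [insert_erase (mem_sigma.1 h).2]
        · rintro ⟨s, j⟩ h
          simp [erase_insert (mem_compl.1 (mem_sigma.1 h).2)]
        · rintro ⟨t, j⟩ _
          rfl
    _ = (Fintype.card σ - m) • esymm σ R m := by
        rw [esymm, smul_sum]
        refine sum_congr rfl fun s hs => ?_
        rw [sum_const, card_compl, mem_powersetCard_univ.1 hs]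

theorem IsSymmetric.of_mul_left [CommRing R] [IsDomain R] {p q : MvPolynomial σ R}
    (hpq : (p * q).IsSymmetric) (hp : p.IsSymmetric) (hp0 : p ≠ 0) : q.IsSymmetric := fun e =>
  mul_left_cancel₀ hp0 (by rw [← hpq e, map_mul, hp e])

theorem sum_monomial_ne_zero [CommSemiring R] {ι : Type*} [Fintype ι] {μ : ι → σ →₀ ℕ}
    (hμ : Injective μ) {c : ι → R} {t : ι} (ht : c t ≠ 0) : ∑ s, monomial (μ s) (c s) ≠ 0 := by
  classical
  intro h
  apply ht
  simpa [coeff_sum, coeff_monomial, hμ.eq_iff] using congr_arg (coeff (μ t)) h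

variable (σ R) in
noncomputable def esymmSubst [CommSemiring R] [Fintype σ] (n : ℕ) :
    MvPolynomial (Fin n) R →ₐ[R] MvPolynomial σ R :=
  aeval fun i => esymm σ R (i + 1)

section CommSemiring

variable [CommSemiring R] [Fintype σ] {n : ℕ}

@[simp]
theorem esymmSubst_X (i : Fin n) : esymmSubst σ R n (X i) = esymm σ R (i + 1) :=
  aeval_X _ _

theorem esymmSubst_apply (p : MvPolynomial (Fin n) R) :
    esymmSubst σ R n p = (esymmAlgHom σ R n p).val :=
  (esymmAlgHom_apply p).symm

theorem sum_pderiv_esymmSubst (p : MvPolynomial (Fin n) R) :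
    ∑ j, pderiv j (esymmSubst σ R n p) =
      ∑ i, esymmSubst σ R n (pderiv i p) * ((Fintype.card σ - i) • esymm σ R i) := by
  unfold esymmSubst
  simp_rw [Derivation.map_mvPolynomial_aeval, smul_eq_mul]
  rw [sum_comm]
  simp_rw [← mul_sum, sum_pderiv_esymm_succ]

theorem sum_pderiv_esymmSubst_monomial {ι : Type*} [Fintype ι]
    {v w : ι → Fin n} (hv : Injective v) (hvw : ∀ t, (v t : ℕ) = w t + 1) {α : Fin n →₀ ℕ}
    (hα : ∀ i ∉ Set.range v, α i = 0) :
    ∑ j, pderiv j (esymmSubst σ R n (monomial α 1)) =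
      esymmSubst σ R n (∑ t, monomial (α - Finsupp.single (v t) 1 + Finsupp.single (w t) 1)
        (((Fintype.card σ - v t) * α (v t) : ℕ) : R)) := by
  rw [sum_pderiv_esymmSubst, map_sum]
  symm
  refine Fintype.sum_of_injective v hv _ _ (fun i hi => by simp [hα i hi]) fun t => ?_
  rw [pderiv_monomial, hvw t, ← esymmSubst_X, ← map_nsmul, ← map_mul, X, smul_monomial,
    monomial_mul, ← hvw t]
  congr 1
  simp [mul_comm]

end CommSemiring

section CommRing

variable [CommRing R] [Fintype σ] {n : ℕ}

theorem esymmSubst_injective (hn : n ≤ Fintype.card σ) : Injective (esymmSubst σ R n) := by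
  intro p q h
  rw [esymmSubst_apply, esymmSubst_apply] at h
  exact esymmAlgHom_injective R hn (Subtype.ext h)

theorem IsSymmetric.exists_esymmSubst_eq (hn : Fintype.card σ ≤ n) {p : MvPolynomial σ R}
    (hp : p.IsSymmetric) : ∃ q, esymmSubst σ R n q = p := by
  obtain ⟨q, hq⟩ := esymmAlgHom_surjective R hn ⟨p, hp⟩
  exact ⟨q, by rw [esymmSubst_apply, hq]⟩

theorem X_dvd_of_esymm_dvd_esymmSubst [IsDomain R] (hn : Fintype.card σ = n) (i : Fin n)
    {p : MvPolynomial (Fin n) R} (h : esymm σ R (i + 1) ∣ esymmSubst σ R n p) : X i ∣ p := by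
  obtain ⟨g, hpg⟩ := h
  have he0 : esymm σ R (i + 1) ≠ 0 := by
    rw [← esymmSubst_X, Ne, map_eq_zero_iff _ (esymmSubst_injective hn.ge)]
    exact X_ne_zero i
  have hg : g.IsSymmetric := by
    refine IsSymmetric.of_mul_left ?_ (esymm_isSymmetric σ R _) he0
    rw [← hpg, esymmSubst_apply]
    exact (esymmAlgHom σ R n p).2
  obtain ⟨q, rfl⟩ := hg.exists_esymmSubst_eq hn.le
  refine ⟨q, esymmSubst_injective hn.ge ?_⟩
  rw [map_mul, esymmSubst_X, hpg]

end CommRing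

end MvPolynomial

theorem esymm_prod_not_dvd_and_sum_pderiv_ne_zero_general
    (K : Type*) [Field K] (n d : ℕ) (hdn : d < n)
    (l : ℕ) (k a : Fin l → ℕ)
    (hk2 : ∀ i, 2 ≤ k i) (ha1 : ∀ i, 1 ≤ a i) (hkinj : Function.Injective k)
    (hsum : ∑ i, k i * a i = d)
    (hcoeff : ∃ i, (((n + 1 - k i) * a i : ℕ) : K) ≠ 0) :
    ¬ (∑ j : Fin n, (X j : MvPolynomial (Fin n) K)) ∣
        (∏ i, esymm (Fin n) K (k i) ^ a i) ∧
      (∑ j : Fin n, pderiv j (∏ i, esymm (Fin n) K (k i) ^ a i)) ≠ 0 := by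
  obtain ⟨i₀, hi₀⟩ := hcoeff
  have hkn : ∀ i, k i < n := fun i =>
    (Nat.le_mul_of_pos_right _ (ha1 i)).trans_lt <|
      (single_le_sum (fun j _ => Nat.zero_le (k j * a j)) (mem_univ i)).trans_lt (hsum ▸ hdn)
  -- `esymmSubst` sends `X (v i)` to `e_{k i}` and `X (w i)` to `e_{k i - 1}`
  let v : Fin l → Fin n := fun i => ⟨k i - 1, by grind⟩
  let w : Fin l → Fin n := fun i => ⟨k i - 2, by grind⟩
  have hvk : ∀ i, (v i : ℕ) + 1 = k i := fun i => by grind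
  have hvw : ∀ i, (v i : ℕ) = w i + 1 := fun i => by grind
  have hv : Injective v := fun i j h => hkinj (by grind)
  let α : Fin n →₀ ℕ := ∑ i, Finsupp.single (v i) (a i)
  have hαv : ∀ i, α (v i) = a i := by simp [α, Finsupp.single_apply, hv.eq_iff]
  have hα : ∀ j ∉ Set.range v, α j = 0 := fun j hj => by
    simp only [α, Finsupp.finsetSum_apply, Finsupp.single_apply]
    exact sum_eq_zero fun i _ => if_neg fun h => hj ⟨i, h⟩
  have hP : ∏ i, esymm (Fin n) K (k i) ^ a i = esymmSubst (Fin n) K n (monomial α 1) := by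
    simp [α, monomial_sum_one, ← X_pow_eq_monomial, hvk]
  rw [hP]
  constructor
  · rw [← esymm_one]
    intro h
    have h0 : (⟨0, by omega⟩ : Fin n) ∉ Set.range v := fun ⟨i, hi⟩ => by
      have := hvk i
      grind
    simpa [hα _ h0] using X_dvd_of_esymm_dvd_esymmSubst (Fintype.card_fin n) ⟨0, by omega⟩ h
  · rw [sum_pderiv_esymmSubst_monomial hv hvw hα, Ne,
      map_eq_zero_iff _ (esymmSubst_injective (Fintype.card_fin n).ge)]
    refine sum_monomial_ne_zero (Finsupp.injective_tsub_single_add_single hv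
      (fun t h => by have := hvw t; rw [h] at this; omega)
      (fun t => by have := ha1 t; rw [hαv]; omega)) (t := i₀) ?_
    rwa [Fintype.card_fin, hαv, show n - v i₀ = n + 1 - k i₀ by have := hvk i₀; omega]

/-- Let `λ ⊢ d` be a partition with all parts ≥ 2, written in multiplicity form with
distinct part sizes `k i` occurring with multiplicities `a i`, and suppose `d < n`,
`n ≠ 0` in `K`, and `(n + 1 - k i)·(a i) ≠ 0` in `K` for some `i`.  Then
`l = x₁ + ⋯ + xₙ` does not divide `e_λ = ∏ᵢ e_{k i}^{a i}` and `D(e_λ) ≠ 0`,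
where `D = ∑ⱼ ∂/∂xⱼ`. -/
theorem esymm_prod_not_dvd_and_sum_pderiv_ne_zero
    (K : Type*) [Field K] [IsAlgClosed K] (n d : ℕ) (hd : 2 ≤ d) (hdn : d < n)
    (hchar : (n : K) ≠ 0)
    (l : ℕ) (k a : Fin l → ℕ)
    (hk2 : ∀ i, 2 ≤ k i) (ha1 : ∀ i, 1 ≤ a i) (hkinj : Function.Injective k)
    (hsum : ∑ i, k i * a i = d)
    (hcoeff : ∃ i, (((n + 1 - k i) * a i : ℕ) : K) ≠ 0) :
    ¬ (∑ j : Fin n, (X j : MvPolynomial (Fin n) K)) ∣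
        (∏ i, esymm (Fin n) K (k i) ^ a i) ∧
      (∑ j : Fin n, pderiv j (∏ i, esymm (Fin n) K (k i) ^ a i)) ≠ 0 :=
  esymm_prod_not_dvd_and_sum_pderiv_ne_zero_general K n d hdn l k a hk2 ha1 hkinj hsum hcoeff
end
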